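/- arXiv:0903.2813 — 4 statements merged into one kernel-verified Lean document; each statement's English description precedes it below -/
import Mathlib

section
/- Let (F, U) be an adjunction with F : V → W, unit η and counit ε, let C be a monad on V and D a monad on W, and let β : DF → FC be a monadic natural isomorphism (so (F, β) is a lax map of monads from D to C). Define δ : CU → UD as the composite UDε ∘ U β⁻¹ U ∘ η C U. Then (U, δ) is a lax map from the monad D on W to the monad C on V. -/
open CategoryTheory Category

/-- Given `F ⊣ U` and a monadic natural isomorphism `β : DF ≅ FC` making `(F, β)`
a lax map of monads, the transformation `δ = UDε ∘ Uβ⁻¹U ∘ ηCU : CU → UD` makes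
`(U, δ)` a lax map from the monad `D` on `W` to the monad `C` on `V`. -/
theorem stmt5 {V W : Type*} [Category V] [Category W]
    (C : Monad V) (D : Monad W) (F : V ⥤ W) (U : W ⥤ V) (adj : F ⊣ U)
    (β : F ⋙ D.toFunctor ≅ C.toFunctor ⋙ F)
    (hμ : ∀ X : V, D.μ.app (F.obj X) ≫ β.hom.app X =
      D.map (β.hom.app X) ≫ β.hom.app (C.obj X) ≫ F.map (C.μ.app X))
    (hη : ∀ X : V, D.η.app (F.obj X) ≫ β.hom.app X = F.map (C.η.app X)) :
    let δ : ∀ Y : W, C.obj (U.obj Y) ⟶ U.obj (D.obj Y) := fun Y =>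
      adj.unit.app (C.obj (U.obj Y)) ≫ U.map (β.inv.app (U.obj Y)) ≫
        U.map (D.map (adj.counit.app Y))
    (∀ Y : W, C.μ.app (U.obj Y) ≫ δ Y =
      C.map (δ Y) ≫ δ (D.obj Y) ≫ U.map (D.μ.app Y)) ∧
    (∀ Y : W, C.η.app (U.obj Y) ≫ δ Y = U.map (D.η.app Y)) := by
  intro δ
  have hδ : ∀ Y : W, δ Y = adj.homEquiv _ _
      (β.inv.app (U.obj Y) ≫ D.map (adj.counit.app Y)) := by
    intro Y
    simp [δ, Adjunction.homEquiv_apply]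
  have μnat : ∀ {Y Y' : W} (f : Y ⟶ Y'), D.μ.app Y ≫ D.map f =
      D.map (D.map f) ≫ D.μ.app Y' := fun f => by
    simpa using (D.μ.naturality f).symm
  have ηnat : ∀ {Y Y' : W} (f : Y ⟶ Y'), f ≫ D.η.app Y' =
      D.η.app Y ≫ D.map f := fun f => by
    simpa using D.η.naturality f
  have hμ' : ∀ X : V, F.map (C.μ.app X) ≫ β.inv.app X =
      β.inv.app (C.obj X) ≫ D.map (β.inv.app X) ≫ D.μ.app (F.obj X) := by
    intro X
    rw [← cancel_mono (β.hom.app X), assoc, assoc, assoc, hμ]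
    have e : ∀ {Z : W} (g : D.obj ((C.toFunctor ⋙ F).obj X) ⟶ Z),
        D.map (β.inv.app X) ≫ D.map (β.hom.app X) ≫ g = g := by
      intro Z g
      rw [← assoc, ← D.toFunctor.map_comp, β.inv_hom_id_app,
        D.toFunctor.map_id, id_comp]
    rw [e, Iso.inv_hom_id_app_assoc]
    simp
  have hη' : ∀ X : V, F.map (C.η.app X) ≫ β.inv.app X = D.η.app (F.obj X) := by
    intro X
    rw [← hη, assoc, β.hom_inv_id_app]
    simp
  have tri : ∀ Y : W, F.map (δ Y) ≫ adj.counit.app (D.obj Y) =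
      β.inv.app (U.obj Y) ≫ D.map (adj.counit.app Y) := by
    intro Y
    have := congrArg (adj.homEquiv _ _).symm (hδ Y)
    simpa [Adjunction.homEquiv_symm_apply] using this
  constructor
  · intro Y
    have nat : F.map (C.map (δ Y)) ≫ β.inv.app (U.obj (D.obj Y)) =
        β.inv.app (C.obj (U.obj Y)) ≫ D.map (F.map (δ Y)) := by
      simpa using β.inv.naturality (δ Y)
    have key : F.map (C.μ.app (U.obj Y)) ≫ β.inv.app (U.obj Y) ≫
          D.map (adj.counit.app Y) =
        F.map (C.map (δ Y)) ≫ (β.inv.app (U.obj (D.obj Y)) ≫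
          D.map (adj.counit.app (D.obj Y))) ≫ D.μ.app Y := by
      calc F.map (C.μ.app (U.obj Y)) ≫ β.inv.app (U.obj Y) ≫
            D.map (adj.counit.app Y)
          = (F.map (C.μ.app (U.obj Y)) ≫ β.inv.app (U.obj Y)) ≫
            D.map (adj.counit.app Y) := by rw [assoc]
        _ = β.inv.app (C.obj (U.obj Y)) ≫ D.map (β.inv.app (U.obj Y)) ≫
            D.μ.app (F.obj (U.obj Y)) ≫ D.map (adj.counit.app Y) := by
            rw [hμ']; simp only [assoc]
        _ = β.inv.app (C.obj (U.obj Y)) ≫ D.map (β.inv.app (U.obj Y)) ≫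
            D.map (D.map (adj.counit.app Y)) ≫ D.μ.app Y := by
            rw [μnat]; rfl
        _ = β.inv.app (C.obj (U.obj Y)) ≫
            D.map (β.inv.app (U.obj Y) ≫ D.map (adj.counit.app Y)) ≫
            D.μ.app Y := by rw [D.toFunctor.map_comp]; simp only [assoc]
        _ = β.inv.app (C.obj (U.obj Y)) ≫
            D.map (F.map (δ Y) ≫ adj.counit.app (D.obj Y)) ≫ D.μ.app Y := by
            rw [tri]
        _ = (β.inv.app (C.obj (U.obj Y)) ≫ D.map (F.map (δ Y))) ≫
            D.map (adj.counit.app (D.obj Y)) ≫ D.μ.app Y := by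
            rw [D.toFunctor.map_comp]; simp only [assoc]
        _ = _ := by rw [← nat]; simp only [assoc]
    calc C.μ.app (U.obj Y) ≫ δ Y
        = adj.homEquiv _ _ (F.map (C.μ.app (U.obj Y)) ≫
            β.inv.app (U.obj Y) ≫ D.map (adj.counit.app Y)) := by
          rw [hδ, Adjunction.homEquiv_naturality_left]
      _ = adj.homEquiv _ _ (F.map (C.map (δ Y)) ≫ (β.inv.app (U.obj (D.obj Y)) ≫
            D.map (adj.counit.app (D.obj Y))) ≫ D.μ.app Y) := by rw [key]; rfl
      _ = C.map (δ Y) ≫ δ (D.obj Y) ≫ U.map (D.μ.app Y) := by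
          rw [Adjunction.homEquiv_naturality_left,
            Adjunction.homEquiv_naturality_right, hδ (D.obj Y)]
  · intro Y
    calc C.η.app (U.obj Y) ≫ δ Y
        = adj.homEquiv _ _ (F.map (C.η.app (U.obj Y)) ≫
            β.inv.app (U.obj Y) ≫ D.map (adj.counit.app Y)) := by
          rw [hδ, Adjunction.homEquiv_naturality_left]
      _ = adj.homEquiv _ _ (adj.counit.app Y ≫ D.η.app Y) := by
          rw [← assoc, hη', ← ηnat]; rfl
      _ = U.map (D.η.app Y) := by
          rw [Adjunction.homEquiv_naturality_right]
          simp [Adjunction.homEquiv_apply]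
end

section
/- Let (Σ, Ω) be an adjoint pair of endofunctors on a category T (Σ left adjoint to Ω, with unit η and counit ε), let C be a monad on T, and let ξ : ΣC → CΣ be a monadic natural isomorphism. Then the composite functor ΩCΣ carries a monad structure: the unit is Ωη_C Σ ∘ η : Id → ΩΣ → ΩCΣ and the multiplication is Ωμ_C Σ ∘ ΩCεCΣ : ΩCΣΩCΣ → ΩCCΣ → ΩCΣ. Moreover these data satisfy the monad unit and associativity axioms. -/
open CategoryTheory

/-- Given an adjunction `Sg ⊣ Om` of endofunctors of `T`, a monad `C` on `T`, and a
monadic natural isomorphism `ξ : ΣC ≅ CΣ`, the composite `ΩCΣ` carries a monad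
structure with unit `Ωη_CΣ ∘ η` and multiplication `Ωμ_CΣ ∘ ΩCεCΣ`, satisfying
the monad unit and associativity axioms. -/
theorem stmt6 {T : Type*} [Category T]
    (C : Monad T) (Sg Om : T ⥤ T) (adj : Sg ⊣ Om)
    (ξ : C.toFunctor ⋙ Sg ≅ Sg ⋙ C.toFunctor)
    (hμ : ∀ X : T, Sg.map (C.μ.app X) ≫ ξ.hom.app X =
      ξ.hom.app (C.obj X) ≫ C.map (ξ.hom.app X) ≫ C.μ.app (Sg.obj X))
    (hη : ∀ X : T, Sg.map (C.η.app X) ≫ ξ.hom.app X = C.η.app (Sg.obj X)) :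
    let M : T ⥤ T := Sg ⋙ C.toFunctor ⋙ Om
    let u : ∀ X : T, X ⟶ M.obj X := fun X =>
      adj.unit.app X ≫ Om.map (C.η.app (Sg.obj X))
    let m : ∀ X : T, M.obj (M.obj X) ⟶ M.obj X := fun X =>
      Om.map (C.map (adj.counit.app (C.obj (Sg.obj X)))) ≫ Om.map (C.μ.app (Sg.obj X))
    (∀ X : T, u (M.obj X) ≫ m X = 𝟙 (M.obj X)) ∧
    (∀ X : T, M.map (u X) ≫ m X = 𝟙 (M.obj X)) ∧
    (∀ X : T, m (M.obj X) ≫ m X = M.map (m X) ≫ m X) := by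
  intro M u m
  refine ⟨?_, ?_, ?_⟩ <;> intro X
  · -- left unit
    simp only [u, m, M, Functor.comp_obj, Category.assoc, ← Om.map_comp]
    have h0 := C.η.naturality (adj.counit.app (C.obj (Sg.obj X)))
    dsimp at h0
    rw [← Category.assoc, ← h0, Category.assoc, Monad.left_unit]
    simp [adj.right_triangle_components]
  · -- right unit
    simp only [u, m, M, Functor.comp_obj, Functor.comp_map, Category.assoc,
      ← Om.map_comp, ← C.map_comp, Sg.map_comp]
    have h1 := adj.counit.naturality (C.η.app (Sg.obj X))
    dsimp at h1
    rw [← C.map_comp_assoc, Category.assoc, h1, adj.left_triangle_components_assoc,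
      Monad.right_unit]
    simp
  · -- associativity
    simp only [u, m, M, Functor.comp_obj, Functor.comp_map, Category.assoc,
      ← Om.map_comp]
    congr 1
    have h1 := adj.counit.naturality
      (C.map (adj.counit.app (C.obj (Sg.obj X))) ≫ C.μ.app (Sg.obj X))
    dsimp at h1
    rw [← C.μ.naturality_assoc, ← C.map_comp_assoc, h1]
    dsimp
    simp [Monad.assoc]
end

section
/- In the situation of the previous setup (monad C on T, adjunction Σ ⊣ Ω, monadic natural isomorphism ξ : ΣC → CΣ), the adjoint natural transformation ξ̃ : C → ΩCΣ of ξ, i.e. the adjunct of ξ under Σ ⊣ Ω, is a morphism of monads from C to the monad ΩCΣ. -/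
open CategoryTheory

/-- In the situation of a monad `C` on `T`, an adjunction `Sg ⊣ Om`, and a monadic
natural isomorphism `ξ : ΣC ≅ CΣ`, the adjunct `ξ̃ = Ωξ ∘ ηC : C → ΩCΣ` is a
morphism of monads from `C` to the induced monad `ΩCΣ`. -/
theorem stmt7 {T : Type*} [Category T]
    (C : Monad T) (Sg Om : T ⥤ T) (adj : Sg ⊣ Om)
    (ξ : C.toFunctor ⋙ Sg ≅ Sg ⋙ C.toFunctor)
    (hμ : ∀ X : T, Sg.map (C.μ.app X) ≫ ξ.hom.app X =
      ξ.hom.app (C.obj X) ≫ C.map (ξ.hom.app X) ≫ C.μ.app (Sg.obj X))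
    (hη : ∀ X : T, Sg.map (C.η.app X) ≫ ξ.hom.app X = C.η.app (Sg.obj X)) :
    let M : T ⥤ T := Sg ⋙ C.toFunctor ⋙ Om
    let u : ∀ X : T, X ⟶ M.obj X := fun X =>
      adj.unit.app X ≫ Om.map (C.η.app (Sg.obj X))
    let m : ∀ X : T, M.obj (M.obj X) ⟶ M.obj X := fun X =>
      Om.map (C.map (adj.counit.app (C.obj (Sg.obj X)))) ≫ Om.map (C.μ.app (Sg.obj X))
    let ξt : ∀ X : T, C.obj X ⟶ M.obj X := fun X =>
      adj.unit.app (C.obj X) ≫ Om.map (ξ.hom.app X)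
    (∀ X : T, C.η.app X ≫ ξt X = u X) ∧
    (∀ X : T, C.μ.app X ≫ ξt X = ξt (C.obj X) ≫ M.map (ξt X) ≫ m X) := by
  intro M u m ξt
  constructor
  · intro X
    show C.η.app X ≫ adj.unit.app (C.obj X) ≫ Om.map (ξ.hom.app X) =
      adj.unit.app X ≫ Om.map (C.η.app (Sg.obj X))
    have h : C.η.app X ≫ adj.unit.app (C.obj X) =
        adj.unit.app X ≫ Om.map (Sg.map (C.η.app X)) := by
      simpa using adj.unit.naturality (C.η.app X)
    rw [← Category.assoc, h, Category.assoc, ← Om.map_comp, hη]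
  · intro X
    show C.μ.app X ≫ adj.unit.app (C.obj X) ≫ Om.map (ξ.hom.app X) =
      (adj.unit.app (C.obj (C.obj X)) ≫ Om.map (ξ.hom.app (C.obj X))) ≫
        M.map (adj.unit.app (C.obj X) ≫ Om.map (ξ.hom.app X)) ≫
        Om.map (C.map (adj.counit.app (C.obj (Sg.obj X)))) ≫ Om.map (C.μ.app (Sg.obj X))
    calc C.μ.app X ≫ adj.unit.app (C.obj X) ≫ Om.map (ξ.hom.app X)
        = adj.unit.app (C.obj (C.obj X)) ≫ Om.map (Sg.map (C.μ.app X)) ≫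
            Om.map (ξ.hom.app X) := by
          have h : C.μ.app X ≫ adj.unit.app (C.obj X) =
              adj.unit.app (C.obj (C.obj X)) ≫ Om.map (Sg.map (C.μ.app X)) := by
            simpa using adj.unit.naturality (C.μ.app X)
          rw [← Category.assoc, h, Category.assoc]
      _ = adj.unit.app (C.obj (C.obj X)) ≫
            Om.map (ξ.hom.app (C.obj X) ≫ C.map (ξ.hom.app X) ≫ C.μ.app (Sg.obj X)) := by
          rw [← Om.map_comp, hμ X]
      _ = _ := by
          have tri : Sg.map (adj.unit.app (C.obj X)) ≫
              adj.counit.app (Sg.obj (C.obj X)) = 𝟙 _ := adj.left_triangle_components _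
          have cnat : Sg.map (Om.map (ξ.hom.app X)) ≫ adj.counit.app (C.obj (Sg.obj X)) =
              adj.counit.app (Sg.obj (C.obj X)) ≫ ξ.hom.app X :=
            adj.counit.naturality (ξ.hom.app X)
          have key : Sg.map (adj.unit.app (C.obj X) ≫ Om.map (ξ.hom.app X)) ≫
              adj.counit.app (C.obj (Sg.obj X)) = ξ.hom.app X := by
            rw [Sg.map_comp, Category.assoc, cnat, ← Category.assoc, tri, Category.id_comp]
          show _ = (adj.unit.app (C.obj (C.obj X)) ≫ Om.map (ξ.hom.app (C.obj X))) ≫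
              Om.map (C.map (Sg.map (adj.unit.app (C.obj X) ≫ Om.map (ξ.hom.app X)))) ≫
              Om.map (C.map (adj.counit.app (C.obj (Sg.obj X)))) ≫ Om.map (C.μ.app (Sg.obj X))
          rw [Category.assoc, ← Om.map_comp, ← Om.map_comp, ← Om.map_comp,
            ← Category.assoc (C.map _), ← C.toFunctor.map_comp, key]
end

section
/- Let F : V → W be left adjoint to Λ : W → V, let C be a monad on V with a monad morphism α : C → ΛF, and give F the right C-action ρ = εF ∘ Fα : FC → F (where ε is the counit). Then for any C-algebra (X, ξ) such that the coequalizer F ⊗_C X of Fξ and ρ_X exists in W, there is a natural bijection W(F ⊗_C X, Y) ≅ C-Alg(X, ΛY) for all objects Y of W, where ΛY is the C-algebra with action Λε ∘ αΛ. -/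
open CategoryTheory CategoryTheory.Limits

/-!
The transpose of `ρ_X ≫ k` under the adjunction is `C(k♯) ≫ α_{ΛY} ≫ Λε_Y`, by naturality of `α`
and a triangle identity. Hence `k : F X ⟶ Y` coequalizes `Fξ` and `ρ_X` exactly when its transpose
`k♯ : X ⟶ ΛY` is a `C`-algebra map, and the universal property of the coequalizer does the rest.
-/

namespace CategoryTheory.Adjunction

variable {V W : Type*} [Category V] [Category W] {F : V ⥤ W} {Λ' : W ⥤ V} (adj : F ⊣ Λ')

theorem homEquiv_map_comp_counit_comp {Z X : V} {Y : W} (m : Z ⟶ Λ'.obj (F.obj X))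
    (k : F.obj X ⟶ Y) :
    adj.homEquiv Z Y ((F.map m ≫ adj.counit.app (F.obj X)) ≫ k) = m ≫ Λ'.map k := by
  simp [homEquiv_unit]

variable {C : Monad V} (α : C ⟶ adj.toMonad)

theorem homEquiv_rightAction_comp {X : V} {Y : W} (k : F.obj X ⟶ Y) :
    adj.homEquiv (C.obj X) Y ((F.map (α.app X) ≫ adj.counit.app (F.obj X)) ≫ k) =
      C.map (adj.homEquiv X Y k) ≫ α.app (Λ'.obj Y) ≫ Λ'.map (adj.counit.app Y) := by
  have hα : C.map (adj.homEquiv X Y k) ≫ α.app (Λ'.obj Y) =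
      α.app X ≫ Λ'.map (F.map (adj.homEquiv X Y k)) := α.naturality _
  have hk : F.map (adj.homEquiv X Y k) ≫ adj.counit.app Y = k := by simp [homEquiv_unit]
  -- `α.app X` lands in `adj.toMonad.obj X`, only defeq to `Λ'.obj (F.obj X)`, so `rw` cannot see
  -- through the composites below and the steps are given as terms.
  calc _ = α.app X ≫ Λ'.map k := adj.homEquiv_map_comp_counit_comp (α.app X) k
    _ = α.app X ≫ Λ'.map (F.map (adj.homEquiv X Y k) ≫ adj.counit.app Y) := by rw [hk]
    _ = _ := by
      rw [Λ'.map_comp]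
      exact (Category.assoc _ _ _).symm.trans ((hα =≫ _).symm.trans (Category.assoc _ _ _))

theorem coequalizes_rightAction_iff (A : C.Algebra) {Y : W} (k : F.obj A.A ⟶ Y) :
    F.map A.a ≫ k = (F.map (α.app A.A) ≫ adj.counit.app (F.obj A.A)) ≫ k ↔
      A.a ≫ adj.homEquiv A.A Y k =
        C.map (adj.homEquiv A.A Y k) ≫ α.app (Λ'.obj Y) ≫ Λ'.map (adj.counit.app Y) := by
  rw [← (adj.homEquiv _ _).apply_eq_iff_eq, homEquiv_naturality_left,
    homEquiv_rightAction_comp]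

end CategoryTheory.Adjunction

/-- Given `F ⊣ Λ'` with induced monad `ΛF`, a monad morphism `α : C ⟶ ΛF`, and a
`C`-algebra `(X, ξ)` such that the coequalizer `F ⊗_C X` of `Fξ` and
`ρ = εF ∘ Fα` exists, there is a natural bijection
`W(F ⊗_C X, Y) ≅ C-Alg(X, ΛY)`, where `ΛY` has the `C`-action `Λε ∘ αΛ`. -/
theorem stmt17 {V W : Type*} [Category V] [Category W]
    (F : V ⥤ W) (Λ' : W ⥤ V) (adj : F ⊣ Λ')
    (C : Monad V) (α : C ⟶ adj.toMonad)
    (A : C.Algebra) (Q : W) (π : F.obj A.A ⟶ Q)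
    (w : F.map A.a ≫ π = (F.map (α.app A.A) ≫ adj.counit.app (F.obj A.A)) ≫ π)
    (hc : Nonempty (IsColimit (Cofork.ofπ π w))) :
    ∃ e : ∀ Y : W, (Q ⟶ Y) ≃
        {h : A.A ⟶ Λ'.obj Y //
          A.a ≫ h = C.map h ≫ α.app (Λ'.obj Y) ≫ Λ'.map (adj.counit.app Y)},
      ∀ (Y Y' : W) (g : Y ⟶ Y') (f : Q ⟶ Y),
        ((e Y') (f ≫ g)).1 = (e Y f).1 ≫ Λ'.map g := by
  obtain ⟨hc⟩ := hc
  refine ⟨fun Y => (Cofork.IsColimit.homIso hc Y).trans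
    ((adj.homEquiv A.A Y).subtypeEquiv (adj.coequalizes_rightAction_iff α A)), ?_⟩
  intro Y Y' g f
  simp [Cofork.IsColimit.homIso, Adjunction.homEquiv_naturality_right]
end
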